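/- arXiv:2112.11196 — 2 statements merged into one kernel-verified Lean document; each statement's English description precedes it below -/
import Mathlib

section
/- Let f^α be the α-fractal function of a continuous f : [x₀,x_N] → ℝ with base b (with b matching f at the endpoints, partition x₀ < ... < x_N, and |α_i| < 1). Then |∫_{x₀}^{x_N} f^α(x) dx − ∫_{x₀}^{x_N} f(x) dx| ≤ (|λ|/(1−|λ|)) · |∫_{x₀}^{x_N} (f(x) − b(x)) dx| where λ = Σ a_i α_i. In particular, as the maximum scaling factor |α|_∞ = max_i |α_i| tends to 0 (over a family of scale vectors), ∫_{x₀}^{x_N} f^α(x) dx tends to ∫_{x₀}^{x_N} f(x) dx; and if α = 0 then ∫_{x₀}^{x_N} f^α(x) dx = ∫_{x₀}^{x_N} f(x) dx. -/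
/-!
Integrating the self-referential equation over `[x (i-1), x i]` and substituting `t = Lᵢ s`
turns the term `αᵢ (fα - b) ∘ Lᵢ⁻¹` into `aᵢ αᵢ ∫ (fα - b)` over the whole interval, so
`∫ fα = ∫ f + λ (∫ fα - ∫ b)`, i.e. `(1 - λ) (∫ fα - ∫ f) = λ (∫ f - ∫ b)`.
Since the `aᵢ` are positive with sum `1`, `|λ| ≤ ∑ aᵢ |αᵢ| < 1`, which gives the bound,
and `λ → 0` as `|α|_∞ → 0`.
-/

/-- Slope of the increasing affine map `L i` sending `[x 0, x N]` onto `[x (i-1), x i]`. -/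
noncomputable def aCoef (x : ℕ → ℝ) (N i : ℕ) : ℝ := (x i - x (i - 1)) / (x N - x 0)

/-- Intercept of `L i`. -/
noncomputable def eCoef (x : ℕ → ℝ) (N i : ℕ) : ℝ :=
  (x N * x (i - 1) - x 0 * x i) / (x N - x 0)

/-- Inverse of `L i t = aCoef * t + eCoef`. -/
noncomputable def Linv (x : ℕ → ℝ) (N i : ℕ) (t : ℝ) : ℝ :=
  (t - eCoef x N i) / aCoef x N i

open Finset Filter Topology intervalIntegral

theorem Finset.sum_Icc_one_pred_eq_sum_range {M : Type*} [AddCommMonoid M] (g : ℕ → ℕ → M)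
    (N : ℕ) : ∑ i ∈ Icc 1 N, g (i - 1) i = ∑ k ∈ range N, g k (k + 1) := by
  induction N with
  | zero => simp
  | succ n ih => rw [sum_Icc_succ_top (by omega), ih, sum_range_succ, Nat.add_sub_cancel]

theorem abs_sub_le_of_eq_add_mul_sub {I J K lam : ℝ} (hE : I = J + lam * (I - K))
    (hlam : |lam| < 1) : |I - J| ≤ |lam| / (1 - |lam|) * |J - K| := by
  rw [div_mul_eq_mul_div, le_div_iff₀ (by linarith)]
  calc |I - J| * (1 - |lam|) ≤ |I - J| * |1 - lam| := by
        gcongr; simpa using abs_sub_abs_le_abs_sub 1 lam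
    _ = |lam| * |J - K| := by
        rw [← abs_mul, ← abs_mul, mul_comm]; congr 1; linear_combination hE

noncomputable def fractalLambda (x : ℕ → ℝ) (N : ℕ) (α : ℕ → ℝ) : ℝ :=
  ∑ i ∈ Icc 1 N, aCoef x N i * α i

def IsAlphaFractal (x : ℕ → ℝ) (N : ℕ) (f b : ℝ → ℝ) (α : ℕ → ℝ) (fα : ℝ → ℝ) : Prop :=
  ∀ i ∈ Icc 1 N, ∀ t ∈ Set.Icc (x (i - 1)) (x i),
    fα t = f t + α i * (fα (Linv x N i t) - b (Linv x N i t))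

section

variable {N : ℕ} {x : ℕ → ℝ}

namespace Partition

theorem strictMonoOn (hx : ∀ i, i < N → x i < x (i + 1)) : StrictMonoOn x (Set.Iic N) :=
  strictMonoOn_Iic_of_lt_succ fun m hm => by simpa using hx m hm

theorem zero_lt_last (hN : 1 ≤ N) (hx : ∀ i, i < N → x i < x (i + 1)) : x 0 < x N :=
  strictMonoOn hx (by simp) (by simp) (by omega)

theorem pred_lt (hx : ∀ i, i < N → x i < x (i + 1)) {i : ℕ} (hi : i ∈ Icc 1 N) :
    x (i - 1) < x i := by
  obtain ⟨h1, h2⟩ := mem_Icc.mp hi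
  simpa [Nat.sub_add_cancel h1] using hx (i - 1) (by omega)

theorem Icc_pred_subset (hx : ∀ i, i < N → x i < x (i + 1)) {i : ℕ} (hi : i ∈ Icc 1 N) :
    Set.Icc (x (i - 1)) (x i) ⊆ Set.Icc (x 0) (x N) := by
  have hmono := (strictMonoOn hx).monotoneOn
  obtain ⟨h1, h2⟩ := mem_Icc.mp hi
  exact Set.Icc_subset_Icc (hmono (by simp) (by simp; omega) (by omega))
    (hmono (by simpa using h2) (by simp) h2)

theorem aCoef_pos (hx : ∀ i, i < N → x i < x (i + 1)) {i : ℕ} (hi : i ∈ Icc 1 N) :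
    0 < aCoef x N i :=
  div_pos (sub_pos.mpr (pred_lt hx hi))
    (sub_pos.mpr (zero_lt_last ((mem_Icc.mp hi).1.trans (mem_Icc.mp hi).2) hx))

theorem sum_aCoef (hN : 1 ≤ N) (hx : ∀ i, i < N → x i < x (i + 1)) :
    ∑ i ∈ Icc 1 N, aCoef x N i = 1 := by
  unfold aCoef
  rw [← sum_div, sum_Icc_one_pred_eq_sum_range (fun j k => x k - x j), sum_range_sub,
    div_self (sub_pos.mpr (zero_lt_last hN hx)).ne']

theorem integral_eq_sum (hx : ∀ i, i < N → x i < x (i + 1)) {g : ℝ → ℝ}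
    (hg : ContinuousOn g (Set.Icc (x 0) (x N))) :
    ∫ t in x 0..x N, g t = ∑ i ∈ Icc 1 N, ∫ t in x (i - 1)..x i, g t := by
  rw [sum_Icc_one_pred_eq_sum_range (fun j k => ∫ t in x j..x k, g t),
    sum_integral_adjacent_intervals]
  intro k hk
  have hk' : k + 1 ∈ Icc 1 N := mem_Icc.mpr ⟨by omega, hk⟩
  have hlt := pred_lt hx hk'
  simp only [Nat.add_sub_cancel] at hlt
  exact (hg.mono (by simpa using Icc_pred_subset hx hk')).intervalIntegrable_of_Icc hlt.le

end Partition

theorem Linv_pred {i : ℕ} (ha : aCoef x N i ≠ 0) : Linv x N i (x (i - 1)) = x 0 := by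
  obtain ⟨hnum, hden⟩ := div_ne_zero_iff.mp ha
  unfold Linv eCoef aCoef
  field_simp
  ring

theorem Linv_self {i : ℕ} (ha : aCoef x N i ≠ 0) : Linv x N i (x i) = x N := by
  obtain ⟨hnum, hden⟩ := div_ne_zero_iff.mp ha
  unfold Linv eCoef aCoef
  field_simp
  ring

theorem mapsTo_Linv {i : ℕ} (ha : 0 < aCoef x N i) :
    Set.MapsTo (Linv x N i) (Set.Icc (x (i - 1)) (x i)) (Set.Icc (x 0) (x N)) := by
  intro t ⟨ht₁, ht₂⟩
  rw [← Linv_pred ha.ne', ← Linv_self ha.ne']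
  constructor <;> unfold Linv <;> gcongr

theorem integral_comp_Linv {i : ℕ} (ha : aCoef x N i ≠ 0) (g : ℝ → ℝ) :
    ∫ t in x (i - 1)..x i, g (Linv x N i t) = aCoef x N i * ∫ t in x 0..x N, g t := by
  simp only [Linv, sub_div]
  rw [integral_comp_div_sub _ ha, ← sub_div, ← sub_div, ← Linv, ← Linv, Linv_pred ha,
    Linv_self ha, smul_eq_mul]

theorem abs_fractalLambda_lt_one {α : ℕ → ℝ} (hN : 1 ≤ N) (hx : ∀ i, i < N → x i < x (i + 1))
    (hα : ∀ i ∈ Icc 1 N, |α i| < 1) : |fractalLambda x N α| < 1 :=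
  calc |fractalLambda x N α| ≤ ∑ i ∈ Icc 1 N, |aCoef x N i * α i| := abs_sum_le_sum_abs _ _
    _ < ∑ i ∈ Icc 1 N, aCoef x N i := by
      refine sum_lt_sum_of_nonempty (nonempty_Icc.mpr hN) fun i hi => ?_
      have ha := Partition.aCoef_pos hx hi
      rw [abs_mul, abs_of_pos ha]
      exact mul_lt_of_lt_one_right ha (hα i hi)
    _ = 1 := Partition.sum_aCoef hN hx

theorem tendsto_fractalLambda {ι : Type*} {l : Filter ι} {A : ι → ℕ → ℝ}
    (hA : ∀ i ∈ Icc 1 N, Tendsto (fun j => |A j i|) l (𝓝 0)) :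
    Tendsto (fun j => fractalLambda x N (A j)) l (𝓝 0) := by
  simpa [fractalLambda] using tendsto_finsetSum (Icc 1 N) fun i hi =>
    ((tendsto_zero_iff_abs_tendsto_zero _).mpr (hA i hi)).const_mul (aCoef x N i)

variable {f b fα : ℝ → ℝ} {α : ℕ → ℝ}

theorem IsAlphaFractal.integral_piece (hx : ∀ i, i < N → x i < x (i + 1))
    (hf : ContinuousOn f (Set.Icc (x 0) (x N))) (hb : ContinuousOn b (Set.Icc (x 0) (x N)))
    (hfα : ContinuousOn fα (Set.Icc (x 0) (x N))) (hfrac : IsAlphaFractal x N f b α fα)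
    {i : ℕ} (hi : i ∈ Icc 1 N) :
    ∫ t in x (i - 1)..x i, fα t = (∫ t in x (i - 1)..x i, f t) +
      aCoef x N i * α i * ((∫ t in x 0..x N, fα t) - ∫ t in x 0..x N, b t) := by
  have hle := (Partition.pred_lt hx hi).le
  have ha := Partition.aCoef_pos hx hi
  have h0N := (Partition.zero_lt_last ((mem_Icc.mp hi).1.trans (mem_Icc.mp hi).2) hx).le
  have hg : ContinuousOn (fun t => α i * (fα (Linv x N i t) - b (Linv x N i t)))
      (Set.Icc (x (i - 1)) (x i)) :=
    continuousOn_const.mul ((hfα.sub hb).comp (by unfold Linv; fun_prop) (mapsTo_Linv ha))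
  rw [integral_congr (g := fun t => f t + α i * (fα (Linv x N i t) - b (Linv x N i t)))
      (by rw [Set.uIcc_of_le hle]; exact hfrac i hi),
    integral_add ((hf.mono (Partition.Icc_pred_subset hx hi)).intervalIntegrable_of_Icc hle)
      (hg.intervalIntegrable_of_Icc hle),
    integral_const_mul, integral_comp_Linv ha.ne' (fun t => fα t - b t),
    integral_sub (hfα.intervalIntegrable_of_Icc h0N) (hb.intervalIntegrable_of_Icc h0N)]
  ring

theorem IsAlphaFractal.integral_eq (hx : ∀ i, i < N → x i < x (i + 1))
    (hf : ContinuousOn f (Set.Icc (x 0) (x N))) (hb : ContinuousOn b (Set.Icc (x 0) (x N)))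
    (hfα : ContinuousOn fα (Set.Icc (x 0) (x N))) (hfrac : IsAlphaFractal x N f b α fα) :
    ∫ t in x 0..x N, fα t = (∫ t in x 0..x N, f t) +
      fractalLambda x N α * ((∫ t in x 0..x N, fα t) - ∫ t in x 0..x N, b t) := by
  conv_lhs => rw [Partition.integral_eq_sum hx hfα]
  rw [sum_congr rfl fun i hi => hfrac.integral_piece hx hf hb hfα hi, sum_add_distrib,
    ← Partition.integral_eq_sum hx hf, fractalLambda, sum_mul]

theorem IsAlphaFractal.abs_integral_sub_le (hN : 1 ≤ N) (hx : ∀ i, i < N → x i < x (i + 1))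
    (hf : ContinuousOn f (Set.Icc (x 0) (x N))) (hb : ContinuousOn b (Set.Icc (x 0) (x N)))
    (hα : ∀ i ∈ Icc 1 N, |α i| < 1) (hfα : ContinuousOn fα (Set.Icc (x 0) (x N)))
    (hfrac : IsAlphaFractal x N f b α fα) :
    |(∫ t in x 0..x N, fα t) - ∫ t in x 0..x N, f t| ≤
      |fractalLambda x N α| / (1 - |fractalLambda x N α|) * |∫ t in x 0..x N, (f t - b t)| := by
  have h0N := (Partition.zero_lt_last hN hx).le
  rw [integral_sub (hf.intervalIntegrable_of_Icc h0N) (hb.intervalIntegrable_of_Icc h0N)]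
  exact abs_sub_le_of_eq_add_mul_sub (hfrac.integral_eq hx hf hb hfα)
    (abs_fractalLambda_lt_one hN hx hα)

theorem IsAlphaFractal.tendsto_integral (hN : 1 ≤ N) (hx : ∀ i, i < N → x i < x (i + 1))
    (hf : ContinuousOn f (Set.Icc (x 0) (x N))) (hb : ContinuousOn b (Set.Icc (x 0) (x N)))
    {ι : Type*} {l : Filter ι} {A : ι → ℕ → ℝ} {F : ι → ℝ → ℝ}
    (hA : ∀ j, ∀ i ∈ Icc 1 N, |A j i| < 1) (hF : ∀ j, ContinuousOn (F j) (Set.Icc (x 0) (x N)))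
    (hfrac : ∀ j, IsAlphaFractal x N f b (A j) (F j))
    (hlim : ∀ i ∈ Icc 1 N, Tendsto (fun j => |A j i|) l (𝓝 0)) :
    Tendsto (fun j => ∫ t in x 0..x N, F j t) l (𝓝 (∫ t in x 0..x N, f t)) := by
  have hlam := (tendsto_fractalLambda (x := x) hlim).abs
  have hbound : Tendsto (fun j => |fractalLambda x N (A j)| / (1 - |fractalLambda x N (A j)|) *
      |∫ t in x 0..x N, (f t - b t)|) l (𝓝 0) := by
    simpa using (hlam.div (tendsto_const_nhds.sub hlam) (by simp)).mul_const
      |∫ t in x 0..x N, (f t - b t)|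
  exact tendsto_iff_norm_sub_tendsto_zero.mpr <| squeeze_zero (fun _ => norm_nonneg _)
    (fun j => (hfrac j).abs_integral_sub_le hN hx hf hb (hA j) (hF j)) hbound

theorem IsAlphaFractal.integral_eq_of_eq_zero (hx : ∀ i, i < N → x i < x (i + 1))
    (hf : ContinuousOn f (Set.Icc (x 0) (x N))) (hb : ContinuousOn b (Set.Icc (x 0) (x N)))
    (hα : ∀ i ∈ Icc 1 N, α i = 0) (hfα : ContinuousOn fα (Set.Icc (x 0) (x N)))
    (hfrac : IsAlphaFractal x N f b α fα) :
    ∫ t in x 0..x N, fα t = ∫ t in x 0..x N, f t := by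
  have hlam : fractalLambda x N α = 0 := sum_eq_zero fun i hi => by rw [hα i hi, mul_zero]
  simpa [hlam] using hfrac.integral_eq hx hf hb hfα

end

theorem integral_close_and_limit_general (N : ℕ) (hN : 1 ≤ N) (x : ℕ → ℝ)
    (hx : ∀ i, i < N → x i < x (i + 1))
    (f b : ℝ → ℝ)
    (hf : ContinuousOn f (Set.Icc (x 0) (x N)))
    (hb : ContinuousOn b (Set.Icc (x 0) (x N))) :
    -- (1) quantitative bound
    (∀ (α : ℕ → ℝ), (∀ i ∈ Finset.Icc 1 N, |α i| < 1) →
      ∀ fα : ℝ → ℝ, ContinuousOn fα (Set.Icc (x 0) (x N)) →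
        (∀ i ∈ Finset.Icc 1 N, ∀ t ∈ Set.Icc (x (i - 1)) (x i),
          fα t = f t + α i * (fα (Linv x N i t) - b (Linv x N i t))) →
        |(∫ t in (x 0)..(x N), fα t) - ∫ t in (x 0)..(x N), f t| ≤
          (|∑ i ∈ Finset.Icc 1 N, aCoef x N i * α i| /
              (1 - |∑ i ∈ Finset.Icc 1 N, aCoef x N i * α i|)) *
            |∫ t in (x 0)..(x N), (f t - b t)|) ∧
    -- (2) as |α|_∞ → 0 over a family of scale vectors, the integrals converge
    (∀ (ι : Type) (l : Filter ι) (A : ι → ℕ → ℝ) (F : ι → ℝ → ℝ),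
      (∀ j, ∀ i ∈ Finset.Icc 1 N, |A j i| < 1) →
      (∀ j, ContinuousOn (F j) (Set.Icc (x 0) (x N))) →
      (∀ j, ∀ i ∈ Finset.Icc 1 N, ∀ t ∈ Set.Icc (x (i - 1)) (x i),
        F j t = f t + A j i * (F j (Linv x N i t) - b (Linv x N i t))) →
      (∀ i ∈ Finset.Icc 1 N, Filter.Tendsto (fun j => |A j i|) l (nhds 0)) →
      Filter.Tendsto (fun j => ∫ t in (x 0)..(x N), F j t) l
        (nhds (∫ t in (x 0)..(x N), f t))) ∧
    -- (3) zero scale vector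
    (∀ (α : ℕ → ℝ), (∀ i ∈ Finset.Icc 1 N, α i = 0) →
      ∀ fα : ℝ → ℝ, ContinuousOn fα (Set.Icc (x 0) (x N)) →
        (∀ i ∈ Finset.Icc 1 N, ∀ t ∈ Set.Icc (x (i - 1)) (x i),
          fα t = f t + α i * (fα (Linv x N i t) - b (Linv x N i t))) →
        ∫ t in (x 0)..(x N), fα t = ∫ t in (x 0)..(x N), f t) :=
  ⟨fun _ hα _ hfα hfrac => IsAlphaFractal.abs_integral_sub_le hN hx hf hb hα hfα hfrac,
    fun _ _ _ _ hA hF hfrac hlim =>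
      IsAlphaFractal.tendsto_integral hN hx hf hb hA hF hfrac hlim,
    fun _ hα _ hfα hfrac => IsAlphaFractal.integral_eq_of_eq_zero hx hf hb hα hfα hfrac⟩

theorem integral_close_and_limit (N : ℕ) (hN : 1 ≤ N) (x : ℕ → ℝ)
    (hx : ∀ i, i < N → x i < x (i + 1))
    (f b : ℝ → ℝ)
    (hf : ContinuousOn f (Set.Icc (x 0) (x N)))
    (hb : ContinuousOn b (Set.Icc (x 0) (x N)))
    (hb0 : b (x 0) = f (x 0)) (hbN : b (x N) = f (x N)) :
    -- (1) quantitative bound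
    (∀ (α : ℕ → ℝ), (∀ i ∈ Finset.Icc 1 N, |α i| < 1) →
      ∀ fα : ℝ → ℝ, ContinuousOn fα (Set.Icc (x 0) (x N)) →
        (∀ i ∈ Finset.Icc 1 N, ∀ t ∈ Set.Icc (x (i - 1)) (x i),
          fα t = f t + α i * (fα (Linv x N i t) - b (Linv x N i t))) →
        |(∫ t in (x 0)..(x N), fα t) - ∫ t in (x 0)..(x N), f t| ≤
          (|∑ i ∈ Finset.Icc 1 N, aCoef x N i * α i| /
              (1 - |∑ i ∈ Finset.Icc 1 N, aCoef x N i * α i|)) *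
            |∫ t in (x 0)..(x N), (f t - b t)|) ∧
    -- (2) as |α|_∞ → 0 over a family of scale vectors, the integrals converge
    (∀ (ι : Type) (l : Filter ι) (A : ι → ℕ → ℝ) (F : ι → ℝ → ℝ),
      (∀ j, ∀ i ∈ Finset.Icc 1 N, |A j i| < 1) →
      (∀ j, ContinuousOn (F j) (Set.Icc (x 0) (x N))) →
      (∀ j, ∀ i ∈ Finset.Icc 1 N, ∀ t ∈ Set.Icc (x (i - 1)) (x i),
        F j t = f t + A j i * (F j (Linv x N i t) - b (Linv x N i t))) →
      (∀ i ∈ Finset.Icc 1 N, Filter.Tendsto (fun j => |A j i|) l (nhds 0)) →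
      Filter.Tendsto (fun j => ∫ t in (x 0)..(x N), F j t) l
        (nhds (∫ t in (x 0)..(x N), f t))) ∧
    -- (3) zero scale vector
    (∀ (α : ℕ → ℝ), (∀ i ∈ Finset.Icc 1 N, α i = 0) →
      ∀ fα : ℝ → ℝ, ContinuousOn fα (Set.Icc (x 0) (x N)) →
        (∀ i ∈ Finset.Icc 1 N, ∀ t ∈ Set.Icc (x (i - 1)) (x i),
          fα t = f t + α i * (fα (Linv x N i t) - b (Linv x N i t))) →
        ∫ t in (x 0)..(x N), fα t = ∫ t in (x 0)..(x N), f t) :=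
  integral_close_and_limit_general N hN x hx f b hf hb
end

section
/- Let I = [x₀,x_N] with partition x₀ < ... < x_N, f, b : I → ℝ continuous with b(x₀) = f(x₀), b(x_N) = f(x_N), and α = (α₁,...,α_N) with |α_i| < 1. Define the Read–Bajraktarević operator T on the space C* = {g ∈ C(I) : g(x₀) = f(x₀), g(x_N) = f(x_N)} by (Tg)(x) = f(x) + α_i (g − b)(L_i^{-1}(x)) for x ∈ [x_{i-1},x_i], where L_i is the increasing affine bijection of I onto [x_{i-1},x_i]. Then T is well defined (Tg is continuous and agrees with f at the endpoints) and is a contraction on C* with respect to the sup norm, with contraction factor max_i |α_i| < 1; hence T has a unique fixed point f^α ∈ C*. -/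
/-!
On the piece `[x (i-1), x i]` the operator is `f + α i • (g - b) ∘ L_i⁻¹`, where `L_i⁻¹` is an
increasing affine bijection onto `[x 0, x N]`. As `g` and `b` agree with `f` at `x 0` and `x N`,
neighbouring pieces both equal `f` at their common node, so they glue to a continuous function with
the right endpoint values. At a point of piece `i` the difference of two images is `α i` times a
difference of the arguments, whence the contraction factor `max |α i|`. Banach's theorem on the
closed set of continuous functions on `[x 0, x N]` with the endpoint values of `f` gives the fixed
point; uniqueness follows by evaluating the contraction estimate at a maximum of `|g - fα|`.
-/

open Set

section Glue

variable {ι α β : Type*}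

-- Off the pieces the value is an arbitrary junk value.
open Classical in
noncomputable def piecewiseOn [Nonempty β] (s : Finset ι) (P : ι → Set α) (φ : ι → α → β)
    (t : α) : β :=
  if h : ∃ i ∈ s, t ∈ P i then φ h.choose t else Classical.arbitrary β

variable [Nonempty β] {s : Finset ι} {P : ι → Set α} {φ : ι → α → β}

theorem piecewiseOn_eq (hφ : ∀ i ∈ s, ∀ j ∈ s, ∀ t ∈ P i ∩ P j, φ i t = φ j t)
    {i : ι} (hi : i ∈ s) {t : α} (ht : t ∈ P i) : piecewiseOn s P φ t = φ i t := by
  have h : ∃ i ∈ s, t ∈ P i := ⟨i, hi, ht⟩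
  rw [piecewiseOn, dif_pos h]
  exact hφ _ h.choose_spec.1 i hi t ⟨h.choose_spec.2, ht⟩

theorem continuousOn_piecewiseOn [TopologicalSpace α] [TopologicalSpace β]
    (hP : ∀ i ∈ s, IsClosed (P i)) (hφc : ∀ i ∈ s, ContinuousOn (φ i) (P i))
    (hφ : ∀ i ∈ s, ∀ j ∈ s, ∀ t ∈ P i ∩ P j, φ i t = φ j t) :
    ContinuousOn (piecewiseOn s P φ) (⋃ i ∈ s, P i) := by
  rw [← Finset.set_biUnion_coe, biUnion_eq_iUnion]
  refine (locallyFinite_of_finite _).continuousOn_iUnion (fun i => hP i i.2) fun i => ?_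
  exact (hφc i i.2).congr fun t ht => piecewiseOn_eq hφ i.2 ht

end Glue

theorem eqOn_of_forall_abs_sub_le_mul {α : Type*} [TopologicalSpace α] {s : Set α}
    (hs : IsCompact s) {u v : α → ℝ} (hu : ContinuousOn u s) (hv : ContinuousOn v s) {k : ℝ}
    (hk : k < 1) (h : ∀ C, (∀ t ∈ s, |u t - v t| ≤ C) → ∀ t ∈ s, |u t - v t| ≤ k * C) :
    EqOn u v s := by
  intro t ht
  obtain ⟨t₀, ht₀, hmax⟩ := hs.exists_isMaxOn ⟨t, ht⟩ (hu.sub hv).abs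
  have hM : |u t₀ - v t₀| ≤ k * |u t₀ - v t₀| := h _ (fun t ht => hmax ht) t₀ ht₀
  have hM0 : |u t₀ - v t₀| ≤ 0 := by nlinarith [abs_nonneg (u t₀ - v t₀)]
  have : |u t - v t| ≤ 0 := (hmax ht).trans hM0
  exact sub_eq_zero.1 (abs_nonpos_iff.1 this)

-- The space `C*` of the paper, as functions on `ℝ` of which only the values on `[a, c]` matter.
def fixedEnds (a c p q : ℝ) : Set (ℝ → ℝ) :=
  {g | ContinuousOn g (Icc a c) ∧ g a = p ∧ g c = q}

theorem exists_mem_fixedEnds_eqOn {a c p q k : ℝ} (hac : a ≤ c)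
    (hne : (fixedEnds a c p q).Nonempty) (hk0 : 0 ≤ k) (hk1 : k < 1) {T : (ℝ → ℝ) → ℝ → ℝ}
    (hT : MapsTo T (fixedEnds a c p q) (fixedEnds a c p q))
    (hT_lip : ∀ g₁ ∈ fixedEnds a c p q, ∀ g₂ ∈ fixedEnds a c p q, ∀ C,
      (∀ s ∈ Icc a c, |g₁ s - g₂ s| ≤ C) → ∀ t ∈ Icc a c, |T g₁ t - T g₂ t| ≤ k * C) :
    ∃ g ∈ fixedEnds a c p q, EqOn (T g) g (Icc a c) := by
  -- Banach's theorem in the closed subset of `C([a, c], ℝ)` cut out by the endpoint values,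
  -- read back on `ℝ` through `IccExtend`.
  set I := Icc a c
  let E : Set C(I, ℝ) := {g | g ⟨a, left_mem_Icc.2 hac⟩ = p ∧ g ⟨c, right_mem_Icc.2 hac⟩ = q}
  have hE (g : C(I, ℝ)) (hg : g ∈ E) : IccExtend hac g ∈ fixedEnds a c p q :=
    ⟨(continuous_IccExtend_iff.2 g.continuous).continuousOn,
      by rw [IccExtend_left, hg.1], by rw [IccExtend_right, hg.2]⟩
  have hEc : IsClosed E := (isClosed_eq (continuous_eval_const _) continuous_const).inter
    (isClosed_eq (continuous_eval_const _) continuous_const)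
  have : CompleteSpace E := hEc.completeSpace_coe
  obtain ⟨g₀, hg₀⟩ := hne
  have : Nonempty E := ⟨⟨⟨I.domRestrict g₀, hg₀.1.domRestrict⟩, hg₀.2⟩⟩
  have hext (g : C(I, ℝ)) {t : ℝ} (ht : t ∈ I) : IccExtend hac g t = g ⟨t, ht⟩ :=
    IccExtend_of_mem hac g ht
  let F (g : E) : E := ⟨⟨I.domRestrict (T (IccExtend hac g.1)), (hT (hE _ g.2)).1.domRestrict⟩,
    (hT (hE _ g.2)).2⟩
  have hF : ContractingWith ⟨k, hk0⟩ F := by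
    refine ⟨hk1, LipschitzWith.of_dist_le_mul fun g₁ g₂ => ?_⟩
    rw [Subtype.dist_eq, Subtype.dist_eq, ContinuousMap.dist_le (by positivity)]
    intro t
    have hC : ∀ s ∈ I, |IccExtend hac g₁.1 s - IccExtend hac g₂.1 s| ≤ dist g₁.1 g₂.1 :=
      fun s hs => by
        rw [hext _ hs, hext _ hs, ← Real.dist_eq]
        exact ContinuousMap.dist_apply_le_dist _
    exact hT_lip _ (hE _ g₁.2) _ (hE _ g₂.2) _ hC t t.2
  set g := ContractingWith.fixedPoint F hF
  have hg : F g = g := hF.fixedPoint_isFixedPt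
  refine ⟨IccExtend hac g.1, hE _ g.2, fun t ht => ?_⟩
  rw [hext _ ht]
  exact congrArg (fun h : E => h.1 ⟨t, ht⟩) hg

theorem exists_mem_Icc_pred_of_mem_Icc (x : ℕ → ℝ) {N : ℕ} (hN : 1 ≤ N) {t : ℝ}
    (ht : t ∈ Icc (x 0) (x N)) : ∃ i ∈ Finset.Icc 1 N, t ∈ Icc (x (i - 1)) (x i) := by
  induction N, hN using Nat.le_induction with
  | base => exact ⟨1, by simp, ht⟩
  | succ n _ ih =>
    by_cases htn : t ≤ x n
    · obtain ⟨i, hi, hti⟩ := ih ⟨ht.1, htn⟩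
      exact ⟨i, Finset.Icc_subset_Icc_right n.le_succ hi, hti⟩
    · exact ⟨n + 1, by simp, (not_le.1 htn).le, ht.2⟩

section Partition

variable {x : ℕ → ℝ} {N i : ℕ}

theorem StrictMonoOn.apply_zero_lt (hx : StrictMonoOn x (Iic N)) (hN : 1 ≤ N) : x 0 < x N :=
  hx (Nat.zero_le N) (mem_Iic.2 le_rfl) (by omega)

theorem StrictMonoOn.apply_pred_lt (hx : StrictMonoOn x (Iic N)) (hi : i ∈ Finset.Icc 1 N) :
    x (i - 1) < x i := by
  rw [Finset.mem_Icc] at hi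
  exact hx (by simp; omega) hi.2 (by omega)

theorem Icc_pred_subset_Icc (hx : MonotoneOn x (Iic N)) (hi : i ∈ Finset.Icc 1 N) :
    Icc (x (i - 1)) (x i) ⊆ Icc (x 0) (x N) := by
  rw [Finset.mem_Icc] at hi
  exact Icc_subset_Icc (hx (Nat.zero_le N) (by simp; omega) (Nat.zero_le _))
    (hx hi.2 (mem_Iic.2 le_rfl) hi.2)

end Partition

section Linv

variable {x : ℕ → ℝ} {N i : ℕ}

theorem aCoef_pos (h0N : x 0 < x N) (hi : x (i - 1) < x i) : 0 < aCoef x N i :=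
  div_pos (sub_pos.2 hi) (sub_pos.2 h0N)

theorem Linv_apply_left (h0N : x 0 < x N) (hi : x (i - 1) < x i) :
    Linv x N i (x (i - 1)) = x 0 := by
  rw [Linv, div_eq_iff (aCoef_pos h0N hi).ne', eCoef, aCoef]
  field_simp [(sub_pos.2 h0N).ne']
  ring

theorem Linv_apply_right (h0N : x 0 < x N) (hi : x (i - 1) < x i) :
    Linv x N i (x i) = x N := by
  rw [Linv, div_eq_iff (aCoef_pos h0N hi).ne', eCoef, aCoef]
  field_simp [(sub_pos.2 h0N).ne']
  ring

theorem mapsTo_Linv_s14 (h0N : x 0 < x N) (hi : x (i - 1) < x i) :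
    MapsTo (Linv x N i) (Icc (x (i - 1)) (x i)) (Icc (x 0) (x N)) := by
  intro t ht
  have := aCoef_pos h0N hi
  rw [← Linv_apply_left h0N hi, ← Linv_apply_right h0N hi]
  exact ⟨by unfold Linv; gcongr; exact ht.1, by unfold Linv; gcongr; exact ht.2⟩

theorem continuous_Linv (x : ℕ → ℝ) (N i : ℕ) : Continuous (Linv x N i) := by
  unfold Linv
  fun_prop

end Linv

section ReadBajraktarevic

variable {x : ℕ → ℝ} {N : ℕ} {f b : ℝ → ℝ} {α : ℕ → ℝ} {g : ℝ → ℝ}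

noncomputable def rbPiece (x : ℕ → ℝ) (N : ℕ) (f b : ℝ → ℝ) (α : ℕ → ℝ) (g : ℝ → ℝ) (i : ℕ)
    (t : ℝ) : ℝ :=
  f t + α i * (g (Linv x N i t) - b (Linv x N i t))

theorem rbPiece_apply_left {i : ℕ} (h0N : x 0 < x N) (hi : x (i - 1) < x i)
    (hg0 : g (x 0) = f (x 0)) (hb0 : b (x 0) = f (x 0)) :
    rbPiece x N f b α g i (x (i - 1)) = f (x (i - 1)) := by
  rw [rbPiece, Linv_apply_left h0N hi, hg0, hb0, sub_self, mul_zero, add_zero]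

theorem rbPiece_apply_right {i : ℕ} (h0N : x 0 < x N) (hi : x (i - 1) < x i)
    (hgN : g (x N) = f (x N)) (hbN : b (x N) = f (x N)) :
    rbPiece x N f b α g i (x i) = f (x i) := by
  rw [rbPiece, Linv_apply_right h0N hi, hgN, hbN, sub_self, mul_zero, add_zero]

theorem rbPiece_eq_of_mem_inter (hx : StrictMonoOn x (Iic N))
    (hg0 : g (x 0) = f (x 0)) (hgN : g (x N) = f (x N))
    (hb0 : b (x 0) = f (x 0)) (hbN : b (x N) = f (x N)) :
    ∀ i ∈ Finset.Icc 1 N, ∀ j ∈ Finset.Icc 1 N,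
      ∀ t ∈ Icc (x (i - 1)) (x i) ∩ Icc (x (j - 1)) (x j),
        rbPiece x N f b α g i t = rbPiece x N f b α g j t := by
  intro i hi j hj t ht
  wlog hij : i < j generalizing i j
  · rcases (not_lt.1 hij).eq_or_lt with rfl | hji
    · rfl
    · exact (this j hj i hi ⟨ht.2, ht.1⟩ hji).symm
  have hi' := Finset.mem_Icc.1 hi
  have hj' := Finset.mem_Icc.1 hj
  have h0N := hx.apply_zero_lt (hi'.1.trans hi'.2)
  -- neighbouring pieces meet only at `x i = x (j - 1)`, where both take the value of `f`
  have hxij : x i ≤ x (j - 1) := hx.monotoneOn hi'.2 (by simp; omega) (by omega)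
  calc rbPiece x N f b α g i t = f t := by
        rw [le_antisymm ht.1.2 (hxij.trans ht.2.1),
          rbPiece_apply_right h0N (hx.apply_pred_lt hi) hgN hbN]
    _ = rbPiece x N f b α g j t := by
        rw [le_antisymm (ht.1.2.trans hxij) ht.2.1,
          rbPiece_apply_left h0N (hx.apply_pred_lt hj) hg0 hb0]

theorem continuousOn_rbPiece (hx : StrictMonoOn x (Iic N))
    (hf : ContinuousOn f (Icc (x 0) (x N))) (hb : ContinuousOn b (Icc (x 0) (x N)))
    (hg : ContinuousOn g (Icc (x 0) (x N))) {i : ℕ} (hi : i ∈ Finset.Icc 1 N) :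
    ContinuousOn (rbPiece x N f b α g i) (Icc (x (i - 1)) (x i)) := by
  have hL := (continuous_Linv x N i).continuousOn (s := Icc (x (i - 1)) (x i))
  have hmaps := mapsTo_Linv_s14
    (hx.apply_zero_lt ((Finset.mem_Icc.1 hi).1.trans (Finset.mem_Icc.1 hi).2)) (hx.apply_pred_lt hi)
  exact (hf.mono (Icc_pred_subset_Icc hx.monotoneOn hi)).add
    (continuousOn_const.mul ((hg.comp hL hmaps).sub (hb.comp hL hmaps)))

noncomputable def rbOperator (x : ℕ → ℝ) (N : ℕ) (f b : ℝ → ℝ) (α : ℕ → ℝ) (g : ℝ → ℝ) :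
    ℝ → ℝ :=
  piecewiseOn (Finset.Icc 1 N) (fun i => Icc (x (i - 1)) (x i)) (rbPiece x N f b α g)

theorem rbOperator_eq_rbPiece (hx : StrictMonoOn x (Iic N))
    (hg0 : g (x 0) = f (x 0)) (hgN : g (x N) = f (x N))
    (hb0 : b (x 0) = f (x 0)) (hbN : b (x N) = f (x N))
    {i : ℕ} (hi : i ∈ Finset.Icc 1 N) {t : ℝ} (ht : t ∈ Icc (x (i - 1)) (x i)) :
    rbOperator x N f b α g t = rbPiece x N f b α g i t :=
  piecewiseOn_eq (rbPiece_eq_of_mem_inter hx hg0 hgN hb0 hbN) hi ht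

theorem rbOperator_mem_fixedEnds (hx : StrictMonoOn x (Iic N)) (hN : 1 ≤ N)
    (hf : ContinuousOn f (Icc (x 0) (x N))) (hb : b ∈ fixedEnds (x 0) (x N) (f (x 0)) (f (x N)))
    (hg : g ∈ fixedEnds (x 0) (x N) (f (x 0)) (f (x N))) :
    rbOperator x N f b α g ∈ fixedEnds (x 0) (x N) (f (x 0)) (f (x N)) := by
  obtain ⟨hbc, hb0, hbN⟩ := hb
  obtain ⟨hgc, hg0, hgN⟩ := hg
  have h0N := hx.apply_zero_lt hN
  have h1 : 1 ∈ Finset.Icc 1 N := Finset.mem_Icc.2 ⟨le_rfl, hN⟩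
  have hN' : N ∈ Finset.Icc 1 N := Finset.mem_Icc.2 ⟨hN, le_rfl⟩
  refine ⟨?_, ?_, ?_⟩
  · refine (continuousOn_piecewiseOn (fun _ _ => isClosed_Icc)
      (fun i hi => continuousOn_rbPiece hx hf hbc hgc hi)
      (rbPiece_eq_of_mem_inter hx hg0 hgN hb0 hbN)).mono fun t ht => ?_
    simpa only [mem_iUnion, exists_prop] using exists_mem_Icc_pred_of_mem_Icc x hN ht
  · rw [rbOperator_eq_rbPiece hx hg0 hgN hb0 hbN h1 ⟨le_rfl, (hx.apply_pred_lt h1).le⟩]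
    exact rbPiece_apply_left h0N (hx.apply_pred_lt h1) hg0 hb0
  · rw [rbOperator_eq_rbPiece hx hg0 hgN hb0 hbN hN' ⟨(hx.apply_pred_lt hN').le, le_rfl⟩]
    exact rbPiece_apply_right h0N (hx.apply_pred_lt hN') hgN hbN

theorem abs_sub_le_mul_of_eq_rbPiece (hx : StrictMonoOn x (Iic N)) (hN : 1 ≤ N) {k : ℝ}
    (hk : ∀ i ∈ Finset.Icc 1 N, |α i| ≤ k) {g₁ g₂ T₁ T₂ : ℝ → ℝ}
    (h₁ : ∀ i ∈ Finset.Icc 1 N, ∀ t ∈ Icc (x (i - 1)) (x i), T₁ t = rbPiece x N f b α g₁ i t)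
    (h₂ : ∀ i ∈ Finset.Icc 1 N, ∀ t ∈ Icc (x (i - 1)) (x i), T₂ t = rbPiece x N f b α g₂ i t)
    {C : ℝ} (hC : ∀ s ∈ Icc (x 0) (x N), |g₁ s - g₂ s| ≤ C) :
    ∀ t ∈ Icc (x 0) (x N), |T₁ t - T₂ t| ≤ k * C := by
  intro t ht
  obtain ⟨i, hi, hti⟩ := exists_mem_Icc_pred_of_mem_Icc x hN ht
  have hL := mapsTo_Linv_s14 (hx.apply_zero_lt hN) (hx.apply_pred_lt hi) hti
  calc |T₁ t - T₂ t| = |α i| * |g₁ (Linv x N i t) - g₂ (Linv x N i t)| := by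
        rw [h₁ i hi t hti, h₂ i hi t hti, rbPiece, rbPiece, ← abs_mul]
        ring_nf
    _ ≤ k * C := mul_le_mul (hk i hi) (hC _ hL) (abs_nonneg _) ((abs_nonneg _).trans (hk i hi))

end ReadBajraktarevic

theorem RB_operator_contraction_general (N : ℕ) (x : ℕ → ℝ)
    (hx : ∀ i, i < N → x i < x (i + 1))
    (f b : ℝ → ℝ)
    (hf : ContinuousOn f (Set.Icc (x 0) (x N)))
    (hb : ContinuousOn b (Set.Icc (x 0) (x N)))
    (hb0 : b (x 0) = f (x 0)) (hbN : b (x N) = f (x N))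
    (α : ℕ → ℝ) (hα : ∀ i ∈ Finset.Icc 1 N, |α i| < 1)
    (hne : (Finset.Icc 1 N).Nonempty) :
    -- (1) T is well defined: Tg is continuous and agrees with f at the endpoints
    (∀ g : ℝ → ℝ, ContinuousOn g (Set.Icc (x 0) (x N)) →
      g (x 0) = f (x 0) → g (x N) = f (x N) →
      ∃ Tg : ℝ → ℝ, ContinuousOn Tg (Set.Icc (x 0) (x N)) ∧
        Tg (x 0) = f (x 0) ∧ Tg (x N) = f (x N) ∧
        ∀ i ∈ Finset.Icc 1 N, ∀ t ∈ Set.Icc (x (i - 1)) (x i),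
          Tg t = f t + α i * (g (Linv x N i t) - b (Linv x N i t))) ∧
    -- (2) T is a contraction in the sup norm with factor max_i |α i| < 1
    ((Finset.Icc 1 N).sup' hne (fun i => |α i|) < 1 ∧
      ∀ g₁ g₂ T₁ T₂ : ℝ → ℝ,
        ContinuousOn g₁ (Set.Icc (x 0) (x N)) →
        ContinuousOn g₂ (Set.Icc (x 0) (x N)) →
        g₁ (x 0) = f (x 0) → g₁ (x N) = f (x N) →
        g₂ (x 0) = f (x 0) → g₂ (x N) = f (x N) →
        (∀ i ∈ Finset.Icc 1 N, ∀ t ∈ Set.Icc (x (i - 1)) (x i),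
          T₁ t = f t + α i * (g₁ (Linv x N i t) - b (Linv x N i t))) →
        (∀ i ∈ Finset.Icc 1 N, ∀ t ∈ Set.Icc (x (i - 1)) (x i),
          T₂ t = f t + α i * (g₂ (Linv x N i t) - b (Linv x N i t))) →
        ∀ C : ℝ, (∀ s ∈ Set.Icc (x 0) (x N), |g₁ s - g₂ s| ≤ C) →
          ∀ t ∈ Set.Icc (x 0) (x N),
            |T₁ t - T₂ t| ≤ ((Finset.Icc 1 N).sup' hne fun i => |α i|) * C) ∧
    -- (3) T has a fixed point, unique among continuous functions with the endpoint values
    (∃ fα : ℝ → ℝ, (ContinuousOn fα (Set.Icc (x 0) (x N)) ∧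
        fα (x 0) = f (x 0) ∧ fα (x N) = f (x N) ∧
        ∀ i ∈ Finset.Icc 1 N, ∀ t ∈ Set.Icc (x (i - 1)) (x i),
          fα t = f t + α i * (fα (Linv x N i t) - b (Linv x N i t))) ∧
      ∀ g : ℝ → ℝ, ContinuousOn g (Set.Icc (x 0) (x N)) →
        g (x 0) = f (x 0) → g (x N) = f (x N) →
        (∀ i ∈ Finset.Icc 1 N, ∀ t ∈ Set.Icc (x (i - 1)) (x i),
          g t = f t + α i * (g (Linv x N i t) - b (Linv x N i t))) →
        ∀ t ∈ Set.Icc (x 0) (x N), g t = fα t) := by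
  have hN : 1 ≤ N := Finset.nonempty_Icc.1 hne
  have hmono : StrictMonoOn x (Iic N) := strictMonoOn_Iic_of_lt_succ fun i hi => by
    simpa using hx i hi
  have hbC : b ∈ fixedEnds (x 0) (x N) (f (x 0)) (f (x N)) := ⟨hb, hb0, hbN⟩
  set k := (Finset.Icc 1 N).sup' hne fun i => |α i|
  have hk : ∀ i ∈ Finset.Icc 1 N, |α i| ≤ k := fun i hi => Finset.le_sup' (fun i => |α i|) hi
  have hk0 : 0 ≤ k := (abs_nonneg _).trans (hk 1 (Finset.mem_Icc.2 ⟨le_rfl, hN⟩))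
  have hk1 : k < 1 := (Finset.sup'_lt_iff hne).2 hα
  have hT (g : ℝ → ℝ) (hg : g ∈ fixedEnds (x 0) (x N) (f (x 0)) (f (x N))) :
      ∀ i ∈ Finset.Icc 1 N, ∀ t ∈ Icc (x (i - 1)) (x i),
        rbOperator x N f b α g t = rbPiece x N f b α g i t :=
    fun i hi t ht => rbOperator_eq_rbPiece hmono hg.2.1 hg.2.2 hb0 hbN hi ht
  refine ⟨fun g hg hg0 hgN => ?_, ⟨hk1, fun g₁ g₂ T₁ T₂ _ _ _ _ _ _ h₁ h₂ C hC =>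
    abs_sub_le_mul_of_eq_rbPiece hmono hN hk h₁ h₂ hC⟩, ?_⟩
  · obtain ⟨hTc, hT0, hTN⟩ := rbOperator_mem_fixedEnds (α := α) hmono hN hf hbC ⟨hg, hg0, hgN⟩
    exact ⟨_, hTc, hT0, hTN, hT g ⟨hg, hg0, hgN⟩⟩
  obtain ⟨fα, hfα, hfix⟩ := exists_mem_fixedEnds_eqOn (hmono.apply_zero_lt hN).le
    ⟨f, hf, rfl, rfl⟩ hk0 hk1 (fun g hg => rbOperator_mem_fixedEnds hmono hN hf hbC hg)
    fun g₁ hg₁ g₂ hg₂ _ hC => abs_sub_le_mul_of_eq_rbPiece hmono hN hk (hT g₁ hg₁) (hT g₂ hg₂) hC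
  have hfαeq : ∀ i ∈ Finset.Icc 1 N, ∀ t ∈ Icc (x (i - 1)) (x i),
      fα t = rbPiece x N f b α fα i t := fun i hi t ht =>
    (hfix (Icc_pred_subset_Icc hmono.monotoneOn hi ht)).symm.trans (hT fα hfα i hi t ht)
  refine ⟨fα, ⟨hfα.1, hfα.2.1, hfα.2.2, hfαeq⟩, fun g hg _ _ hgeq => ?_⟩
  exact eqOn_of_forall_abs_sub_le_mul isCompact_Icc hg hfα.1 hk1 fun _ hC =>
    abs_sub_le_mul_of_eq_rbPiece hmono hN hk hgeq hfαeq hC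

theorem RB_operator_contraction (N : ℕ) (hN : 1 ≤ N) (x : ℕ → ℝ)
    (hx : ∀ i, i < N → x i < x (i + 1))
    (f b : ℝ → ℝ)
    (hf : ContinuousOn f (Set.Icc (x 0) (x N)))
    (hb : ContinuousOn b (Set.Icc (x 0) (x N)))
    (hb0 : b (x 0) = f (x 0)) (hbN : b (x N) = f (x N))
    (α : ℕ → ℝ) (hα : ∀ i ∈ Finset.Icc 1 N, |α i| < 1)
    (hne : (Finset.Icc 1 N).Nonempty) :
    -- (1) T is well defined: Tg is continuous and agrees with f at the endpoints
    (∀ g : ℝ → ℝ, ContinuousOn g (Set.Icc (x 0) (x N)) →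
      g (x 0) = f (x 0) → g (x N) = f (x N) →
      ∃ Tg : ℝ → ℝ, ContinuousOn Tg (Set.Icc (x 0) (x N)) ∧
        Tg (x 0) = f (x 0) ∧ Tg (x N) = f (x N) ∧
        ∀ i ∈ Finset.Icc 1 N, ∀ t ∈ Set.Icc (x (i - 1)) (x i),
          Tg t = f t + α i * (g (Linv x N i t) - b (Linv x N i t))) ∧
    -- (2) T is a contraction in the sup norm with factor max_i |α i| < 1
    ((Finset.Icc 1 N).sup' hne (fun i => |α i|) < 1 ∧
      ∀ g₁ g₂ T₁ T₂ : ℝ → ℝ,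
        ContinuousOn g₁ (Set.Icc (x 0) (x N)) →
        ContinuousOn g₂ (Set.Icc (x 0) (x N)) →
        g₁ (x 0) = f (x 0) → g₁ (x N) = f (x N) →
        g₂ (x 0) = f (x 0) → g₂ (x N) = f (x N) →
        (∀ i ∈ Finset.Icc 1 N, ∀ t ∈ Set.Icc (x (i - 1)) (x i),
          T₁ t = f t + α i * (g₁ (Linv x N i t) - b (Linv x N i t))) →
        (∀ i ∈ Finset.Icc 1 N, ∀ t ∈ Set.Icc (x (i - 1)) (x i),
          T₂ t = f t + α i * (g₂ (Linv x N i t) - b (Linv x N i t))) →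
        ∀ C : ℝ, (∀ s ∈ Set.Icc (x 0) (x N), |g₁ s - g₂ s| ≤ C) →
          ∀ t ∈ Set.Icc (x 0) (x N),
            |T₁ t - T₂ t| ≤ ((Finset.Icc 1 N).sup' hne fun i => |α i|) * C) ∧
    -- (3) T has a fixed point, unique among continuous functions with the endpoint values
    (∃ fα : ℝ → ℝ, (ContinuousOn fα (Set.Icc (x 0) (x N)) ∧
        fα (x 0) = f (x 0) ∧ fα (x N) = f (x N) ∧
        ∀ i ∈ Finset.Icc 1 N, ∀ t ∈ Set.Icc (x (i - 1)) (x i),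
          fα t = f t + α i * (fα (Linv x N i t) - b (Linv x N i t))) ∧
      ∀ g : ℝ → ℝ, ContinuousOn g (Set.Icc (x 0) (x N)) →
        g (x 0) = f (x 0) → g (x N) = f (x N) →
        (∀ i ∈ Finset.Icc 1 N, ∀ t ∈ Set.Icc (x (i - 1)) (x i),
          g t = f t + α i * (g (Linv x N i t) - b (Linv x N i t))) →
        ∀ t ∈ Set.Icc (x 0) (x N), g t = fα t) :=
  RB_operator_contraction_general N x hx f b hf hb hb0 hbN α hα hne
end
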